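/- Assume the nonstationary ideal on ω₁ is saturated. Then every stationary set 𝒯 ⊆ [ω₂]^ω is A-projective stationary for some stationary A ⊆ ω₁: there exists a stationary A ⊆ ω₁ such that for every stationary B ⊆ A, the set {σ ∈ 𝒯 : σ ∩ ω₁ ∈ B} is stationary in [ω₂]^ω. -/

import Mathlib

/-- The first uncountable ordinal. -/
noncomputable def ω1 : Ordinal.{0} := (Cardinal.aleph 1).ord
/-- The second uncountable ordinal. -/
noncomputable def ω2 : Ordinal.{0} := (Cardinal.aleph 2).ord

-- The order type of a set of ordinals (correct whenever the set is small, e.g. countable).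
open Classical in
noncomputable def otp (σ : Set Ordinal.{0}) : Ordinal.{0} :=
  if h : ∃ o : Ordinal.{0}, Ordinal.lift.{1, 0} o =
      Ordinal.type ((· < ·) : σ → σ → Prop) then h.choose else 0

/-- `σ ∈ [α]^ω`: σ is a countably infinite subset of (the ordinals below) α. -/
def MemCtble (α : Ordinal.{0}) (σ : Set Ordinal.{0}) : Prop :=
  σ.Countable ∧ σ.Infinite ∧ ∀ x ∈ σ, x < α

/-- `C` is a club subset of `[α]^ω`: all members lie in `[α]^ω`, `C` is closed under
unions of increasing ω-chains, and `C` is cofinal under inclusion. -/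
def IsClubIn (α : Ordinal.{0}) (C : Set (Set Ordinal.{0})) : Prop :=
  (∀ σ ∈ C, MemCtble α σ) ∧
  (∀ f : ℕ → Set Ordinal.{0}, (∀ n, f n ∈ C) → (∀ n, f n ⊆ f (n + 1)) →
    (⋃ n, f n) ∈ C) ∧
  (∀ σ, MemCtble α σ → ∃ τ ∈ C, σ ⊆ τ)

/-- `S` is stationary in `[α]^ω`: it meets every club of `[α]^ω`. -/
def StatIn (α : Ordinal.{0}) (S : Set (Set Ordinal.{0})) : Prop :=
  ∀ C, IsClubIn α C → (S ∩ C).Nonempty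

/-- `C` is a closed unbounded subset of the ordinal `κ`. -/
def IsClubBelow (κ : Ordinal.{0}) (C : Set Ordinal.{0}) : Prop :=
  (∀ x ∈ C, x < κ) ∧ (∀ β < κ, ∃ x ∈ C, β ≤ x) ∧
  (∀ S : Set Ordinal.{0}, S ⊆ C → S.Nonempty → sSup S < κ → sSup S ∈ C)

/-- `S` is a stationary subset of the ordinal `κ`: it meets every club of `κ`. -/
def StatBelow (κ : Ordinal.{0}) (S : Set Ordinal.{0}) : Prop :=
  ∀ C, IsClubBelow κ C → (S ∩ C).Nonempty

/-- The tilde operation: `α ∈ tilde X` iff `ω1 ≤ α < ω2` and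
`{σ ∈ [α]^ω : otp σ ∈ X}` contains a club of `[α]^ω`. -/
def tilde (X : Set Ordinal.{0}) : Set Ordinal.{0} :=
  {α | ω1 ≤ α ∧ α < ω2 ∧ ∃ C, IsClubIn α C ∧ C ⊆ {σ | otp σ ∈ X}}

/-- `σ ∩ ω₁` equals the ordinal `γ` (i.e. as sets, `σ ∩ ω₁ = {x : x < γ}`). -/
def MeetO1 (σ : Set Ordinal.{0}) (γ : Ordinal.{0}) : Prop :=
  σ ∩ Set.Iio ω1 = Set.Iio γ

/-!
Suppose the theorem fails, and let `I` be the family of stationary `B ⊆ ω₁` for which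
`{σ ∈ 𝒯 : σ ∩ ω₁ ∈ B}` is nonstationary; by assumption `I` is dense below every stationary set.
Saturation turns a maximal antichain inside `I` into a sequence `⟨A_γ : γ < ω₁⟩` from `I` whose
diagonal union contains a club `D`. Pick clubs `𝒞_γ ⊆ [ω₂]^ω` disjoint from
`{σ ∈ 𝒯 : σ ∩ ω₁ ∈ A_γ}`. The `σ` with `σ ∩ ω₁ ∈ D` lying in the diagonal intersection of the `𝒞_γ`
form a club, so one of them lies in `𝒯`; but `δ = σ ∩ ω₁` belongs to some `A_γ` with `γ < δ`,
so `γ ∈ σ` and `σ ∈ 𝒞_γ`, a contradiction.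
-/

open Set

lemma omega1_lt_omega2 : ω1 < ω2 :=
  Cardinal.ord_lt_ord.2 (Cardinal.aleph_lt_aleph.2 one_lt_two)

lemma add_one_lt_omega1 {x : Ordinal.{0}} (h : x < ω1) : x + 1 < ω1 := by
  rw [← Order.succ_eq_add_one]
  exact (Cardinal.isSuccLimit_ord (Cardinal.aleph0_le_aleph 1)).succ_lt h

lemma iSup_lt_omega1 {ι : Type*} [Countable ι] {f : ι → Ordinal.{0}} (hf : ∀ i, f i < ω1) :
    ⨆ i, f i < ω1 := by
  rw [ω1, Cardinal.ord_aleph] at hf ⊢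
  exact Ordinal.iSup_lt_omega_one hf

lemma countable_Iio_of_lt_omega1 {d : Ordinal.{0}} (hd : d < ω1) : (Iio d).Countable := by
  rw [← countable_coe_iff, ← Cardinal.mk_le_aleph0_iff, Cardinal.mk_Iio_ordinal,
    Cardinal.lift_le_aleph0, ← Order.lt_succ_iff, Cardinal.succ_aleph0, ← Cardinal.lt_ord]
  exact hd

lemma Set.Countable.exists_lt_omega1_forall_lt {s : Set Ordinal.{0}} (hs : s.Countable)
    (h : ∀ x ∈ s, x < ω1) : ∃ β < ω1, ∀ x ∈ s, x < β := by
  have : Countable s := hs.to_subtype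
  refine ⟨(⨆ x : s, x.1) + 1, add_one_lt_omega1 (iSup_lt_omega1 fun x => h x x.2),
    fun x hx => Order.lt_add_one_iff.2 ?_⟩
  exact Ordinal.le_iSup (fun x : s => x.1) ⟨x, hx⟩

lemma IsClubBelow.iSup_mem {D : Set Ordinal.{0}} (hD : IsClubBelow ω1 D) {d : ℕ → Ordinal.{0}}
    (hd : ∀ n, d n ∈ D) : ⨆ n, d n ∈ D :=
  hD.2.2 _ (range_subset_iff.2 hd) (range_nonempty d) (iSup_lt_omega1 fun n => hD.1 _ (hd n))

lemma not_statBelow_of_forall_le {B : Set Ordinal.{0}} {c : Ordinal.{0}} (hc : c < ω1)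
    (hB : ∀ x ∈ B, x ≤ c) : ¬ StatBelow ω1 B := by
  have hclub : IsClubBelow ω1 (Ioo c ω1) := by
    refine ⟨fun x hx => hx.2, fun β hβ => ⟨max β (c + 1), ⟨?_, max_lt hβ (add_one_lt_omega1 hc)⟩,
      le_max_left _ _⟩, fun S hS ⟨x, hx⟩ hlt => ⟨?_, hlt⟩⟩
    · exact (Order.lt_add_one_iff.2 le_rfl).trans_le (le_max_right _ _)
    · exact (hS hx).1.trans_le (le_csSup ⟨ω1, fun y hy => (hS hy).2.le⟩ hx)
  intro hstat
  obtain ⟨x, hxB, hxc, -⟩ := hstat _ hclub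
  exact (hB x hxB).not_gt hxc

lemma MemCtble.iUnion {α : Ordinal.{0}} {f : ℕ → Set Ordinal.{0}} (hf : ∀ n, MemCtble α (f n)) :
    MemCtble α (⋃ n, f n) :=
  ⟨countable_iUnion fun n => (hf n).1, (hf 0).2.1.mono (subset_iUnion f 0),
    fun x hx => by obtain ⟨n, hn⟩ := mem_iUnion.1 hx; exact (hf n).2.2 x hn⟩

lemma MemCtble.union_Iio {α d : Ordinal.{0}} {s : Set Ordinal.{0}} (hs : MemCtble α s)
    (hd : d < ω1) (hdα : d ≤ α) : MemCtble α (s ∪ Iio d) :=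
  ⟨hs.1.union (countable_Iio_of_lt_omega1 hd), hs.2.1.mono subset_union_left,
    fun x hx => hx.elim (hs.2.2 x) fun hx => lt_of_lt_of_le hx hdα⟩

lemma IsClubIn.iUnion_mem_of_subseq {α : Ordinal.{0}} {C : Set (Set Ordinal.{0})}
    (hC : IsClubIn α C) {t : ℕ → Set Ordinal.{0}} (ht : Monotone t) {g : ℕ → ℕ}
    (hg : Monotone g) (hle : ∀ n, n ≤ g n) (htC : ∀ n, t (g n) ∈ C) : ⋃ n, t n ∈ C := by
  have : ⋃ n, t (g n) = ⋃ n, t n :=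
    (iUnion_subset fun n => subset_iUnion t (g n)).antisymm (iUnion_mono fun n => ht (hle n))
  exact this ▸ hC.2.1 _ htC fun n => ht (hg n.le_succ)

lemma isClubIn_iInter {α : Ordinal.{0}} {ι : Type*} [Countable ι] [Nonempty ι]
    {C : ι → Set (Set Ordinal.{0})} (hC : ∀ i, IsClubIn α (C i)) : IsClubIn α (⋂ i, C i) := by
  refine ⟨fun σ hσ => (hC (Classical.arbitrary ι)).1 σ (mem_iInter.1 hσ _),
    fun f hf hmono => mem_iInter.2 fun i => (hC i).2.1 f (fun n => mem_iInter.1 (hf n) i) hmono,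
    fun σ hσ => ?_⟩
  obtain ⟨e, he⟩ := exists_surjective_nat ι
  have hext : ∀ i s, ∃ τ, MemCtble α s → τ ∈ C i ∧ s ⊆ τ := by
    intro i s
    by_cases hs : MemCtble α s
    · obtain ⟨τ, hτ, hsτ⟩ := (hC i).2.2 s hs
      exact ⟨τ, fun _ => ⟨hτ, hsτ⟩⟩
    · exact ⟨s, fun h => absurd h hs⟩
  choose ext hext using hext
  -- Stage `n + 1` lands in `C (e (unpair n).1)`, so each club is visited at the cofinal set of
  -- stages `pair k m + 1`.
  let t : ℕ → Set Ordinal.{0} := fun n => Nat.rec σ (fun n s => ext (e n.unpair.1) s) n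
  have hstep : ∀ n, t (n + 1) ∈ C (e n.unpair.1) ∧ t n ⊆ t (n + 1) := by
    intro n
    induction n with
    | zero => exact hext _ _ hσ
    | succ n ih => exact hext _ _ ((hC _).1 _ ih.1)
  refine ⟨⋃ n, t n, mem_iInter.2 fun i => ?_, subset_iUnion t 0⟩
  obtain ⟨k, rfl⟩ := he i
  have hpair : StrictMono (Nat.pair k) :=
    strictMono_nat_of_lt_succ fun m => Nat.pair_lt_pair_right k m.lt_succ_self
  refine (hC (e k)).iUnion_mem_of_subseq (monotone_nat_of_le_succ fun n => (hstep n).2)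
    (g := fun m => Nat.pair k m + 1) (fun a b hab => Nat.succ_le_succ (hpair.monotone hab))
    (fun m => (Nat.right_le_pair k m).trans (Nat.le_succ _)) fun m => ?_
  simpa only [Nat.unpair_pair] using (hstep (Nat.pair k m)).1

def diagInter (α : Ordinal.{0}) (D : Set Ordinal.{0}) (𝒞 : Ordinal.{0} → Set (Set Ordinal.{0})) :
    Set (Set Ordinal.{0}) :=
  {σ | MemCtble α σ ∧ (∃ δ ∈ D, MeetO1 σ δ) ∧ ∀ γ ∈ σ, γ < ω1 → σ ∈ 𝒞 γ}

section diagInter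

variable {α : Ordinal.{0}} {D : Set Ordinal.{0}} {𝒞 : Ordinal.{0} → Set (Set Ordinal.{0})}

lemma iUnion_mem_diagInter_of_chain (hD : IsClubBelow ω1 D)
    (h𝒞 : ∀ γ < ω1, IsClubIn α (𝒞 γ)) {f : ℕ → Set Ordinal.{0}}
    (hf : ∀ n, f n ∈ diagInter α D 𝒞) (hchain : ∀ n, f n ⊆ f (n + 1)) :
    ⋃ n, f n ∈ diagInter α D 𝒞 := by
  have hmono : Monotone f := monotone_nat_of_le_succ hchain
  choose δ hδD hfδ using fun n => (hf n).2.1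
  refine ⟨MemCtble.iUnion fun n => (hf n).1, ⟨⨆ n, δ n, hD.iSup_mem hδD, ?_⟩, ?_⟩
  · rw [MeetO1, iUnion_inter, iUnion_congr hfδ]
    ext x
    simp only [mem_iUnion, mem_Iio, Ordinal.lt_iSup_iff]
  · intro γ hγ hγ1
    obtain ⟨m, hm⟩ := mem_iUnion.1 hγ
    exact (h𝒞 γ hγ1).iUnion_mem_of_subseq hmono (g := fun k => m + k)
      (fun _ _ h => by dsimp only; omega) (fun _ => by omega)
      fun k => (hf _).2.2 γ (hmono (by omega) hm) hγ1

lemma iUnion_mem_diagInter_of_interleaved (hD : IsClubBelow ω1 D)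
    (h𝒞 : ∀ γ < ω1, IsClubIn α (𝒞 γ)) {s : ℕ → Set Ordinal.{0}} {d : ℕ → Ordinal.{0}}
    (hs : ∀ n, MemCtble α (s n)) (hdD : ∀ n, d n ∈ D) (hsub : ∀ n, s n ∪ Iio (d n) ⊆ s (n + 1))
    (hlt : ∀ n, ∀ x ∈ s n, x < ω1 → x < d n) (hs𝒞 : ∀ n, ∀ γ < d n, s (n + 1) ∈ 𝒞 γ) :
    ⋃ n, s n ∈ diagInter α D 𝒞 := by
  have hmono : Monotone s := monotone_nat_of_le_succ fun n => subset_union_left.trans (hsub n)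
  refine ⟨MemCtble.iUnion hs, ⟨⨆ n, d n, hD.iSup_mem hdD, ?_⟩, ?_⟩
  · ext x
    simp only [mem_inter_iff, mem_iUnion, mem_Iio, Ordinal.lt_iSup_iff]
    constructor
    · rintro ⟨⟨n, hxn⟩, hx1⟩
      exact ⟨n, hlt n x hxn hx1⟩
    · rintro ⟨n, hxn⟩
      exact ⟨⟨n + 1, hsub n (Or.inr hxn)⟩, hxn.trans (hD.1 _ (hdD n))⟩
  · intro γ hγ hγ1
    obtain ⟨n, hn⟩ := mem_iUnion.1 hγ
    exact (h𝒞 γ hγ1).iUnion_mem_of_subseq hmono (g := fun k => n + k + 1)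
      (fun _ _ h => by dsimp only; omega) (fun _ => by omega)
      fun k => hs𝒞 _ γ (hlt _ γ (hmono (by omega) hn) hγ1)

lemma exists_diagInter_step (hα : ω1 ≤ α) (hD : IsClubBelow ω1 D)
    (h𝒞 : ∀ γ < ω1, IsClubIn α (𝒞 γ)) {s : Set Ordinal.{0}} (hs : MemCtble α s) :
    ∃ d ∈ D, ∃ τ, MemCtble α τ ∧ s ∪ Iio d ⊆ τ ∧ (∀ x ∈ s, x < ω1 → x < d) ∧
      ∀ γ < d, τ ∈ 𝒞 γ := by
  obtain ⟨β, hβ, hsβ⟩ := (hs.1.mono inter_subset_left).exists_lt_omega1_forall_lt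
    (s := s ∩ Iio ω1) fun x hx => hx.2
  obtain ⟨d, hdD, hβd⟩ := hD.2.1 (β + 1) (add_one_lt_omega1 hβ)
  have hβd : β < d := Order.add_one_le_iff.1 hβd
  have hd : d < ω1 := hD.1 d hdD
  have : Countable (Iio d) := (countable_Iio_of_lt_omega1 hd).to_subtype
  have : Nonempty (Iio d) := ⟨⟨β, hβd⟩⟩
  have hclub := isClubIn_iInter fun γ : Iio d => h𝒞 γ (γ.2.trans hd)
  obtain ⟨τ, hτ, hsτ⟩ := hclub.2.2 _ (hs.union_Iio hd (hd.le.trans hα))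
  exact ⟨d, hdD, τ, hclub.1 τ hτ, hsτ, fun x hx hx1 => (hsβ x ⟨hx, hx1⟩).trans hβd,
    fun γ hγ => mem_iInter.1 hτ ⟨γ, hγ⟩⟩

lemma isClubIn_diagInter (hα : ω1 ≤ α) (hD : IsClubBelow ω1 D)
    (h𝒞 : ∀ γ < ω1, IsClubIn α (𝒞 γ)) : IsClubIn α (diagInter α D 𝒞) := by
  refine ⟨fun σ hσ => hσ.1, fun f hf hchain => iUnion_mem_diagInter_of_chain hD h𝒞 hf hchain,
    fun σ hσ => ?_⟩
  choose! d hdD τ hτ hsub hlt hτ𝒞 using fun s (hs : MemCtble α s) =>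
    exists_diagInter_step hα hD h𝒞 hs
  let s : ℕ → Set Ordinal.{0} := fun n => Nat.rec σ (fun _ s => τ s) n
  have hs : ∀ n, MemCtble α (s n) := by
    intro n
    induction n with
    | zero => exact hσ
    | succ n ih => exact hτ _ ih
  exact ⟨⋃ n, s n, iUnion_mem_diagInter_of_interleaved hD h𝒞 hs (fun n => hdD _ (hs n))
    (fun n => hsub _ (hs n)) (fun n => hlt _ (hs n)) (fun n => hτ𝒞 _ (hs n)),
    subset_iUnion s 0⟩

lemma StatIn.exists_mem_avoiding_diagonal (hα : ω1 ≤ α) {𝒯 : Set (Set Ordinal.{0})}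
    (h𝒯 : StatIn α 𝒯) (hD : IsClubBelow ω1 D) {N : Ordinal.{0} → Set (Set Ordinal.{0})}
    (hN : ∀ γ < ω1, ¬ StatIn α (N γ)) :
    ∃ σ ∈ 𝒯, ∃ δ ∈ D, MeetO1 σ δ ∧ ∀ γ < δ, σ ∉ N γ := by
  have hclub : ∀ γ, ∃ C, γ < ω1 → IsClubIn α C ∧ N γ ∩ C = ∅ := by
    intro γ
    by_cases hγ : γ < ω1
    · have := hN γ hγ
      simp only [StatIn, not_forall, not_nonempty_iff_eq_empty] at this
      obtain ⟨C, hC, hNC⟩ := this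
      exact ⟨C, fun _ => ⟨hC, hNC⟩⟩
    · exact ⟨∅, fun h => absurd h hγ⟩
  choose! 𝒞 h𝒞 h𝒞N using hclub
  obtain ⟨σ, hσ𝒯, -, ⟨δ, hδD, hσδ⟩, hσ𝒞⟩ := h𝒯 _ (isClubIn_diagInter hα hD h𝒞)
  refine ⟨σ, hσ𝒯, δ, hδD, hσδ, fun γ hγ hσN => ?_⟩
  have hγσ : γ ∈ σ ∩ Iio ω1 := hσδ ▸ hγ
  exact (h𝒞N γ hγσ.2).subset ⟨hσN, hσ𝒞 γ hγσ.1 hγσ.2⟩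

end diagInter

def NSSaturated : Prop :=
  ∀ 𝒜 : Set (Set Ordinal.{0}), (∀ A ∈ 𝒜, (∀ x ∈ A, x < ω1) ∧ StatBelow ω1 A) →
    𝒜.Pairwise (fun A B => ¬ StatBelow ω1 (A ∩ B)) → ∃ f : ↥𝒜 → ↥(Iio ω1), Function.Injective f

lemma exists_maximal_pairwise_subset {β : Type*} (I : Set β) (r : β → β → Prop) :
    ∃ 𝒜, Maximal (fun 𝒜 => 𝒜 ⊆ I ∧ 𝒜.Pairwise r) 𝒜 :=
  zorn_subset _ fun c hcI hc => ⟨⋃₀ c, ⟨sUnion_subset fun _ hs => (hcI hs).1,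
    hc.pairwise_sUnion.2 fun _ hs => (hcI hs).2⟩, fun _ => subset_sUnion_of_mem⟩

theorem NSSaturated.exists_club_subset_diagonal_union (hsat : NSSaturated)
    {I : Set (Set Ordinal.{0})} (hI : ∀ B ∈ I, (∀ x ∈ B, x < ω1) ∧ StatBelow ω1 B)
    (hdense : ∀ A, (∀ x ∈ A, x < ω1) → StatBelow ω1 A → ∃ B ∈ I, B ⊆ A) :
    ∃ A : Ordinal.{0} → Set Ordinal.{0}, (∀ γ < ω1, A γ ∈ I) ∧
      ∃ D, IsClubBelow ω1 D ∧ ∀ δ ∈ D, ∃ γ < δ, δ ∈ A γ := by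
  obtain ⟨𝒜, ⟨h𝒜I, h𝒜⟩, hmax⟩ :=
    exists_maximal_pairwise_subset I fun A B => ¬ StatBelow ω1 (A ∩ B)
  obtain ⟨f, hf⟩ := hsat 𝒜 (fun A hA => hI A (h𝒜I hA)) h𝒜
  obtain ⟨D, hD, hD𝒜⟩ : ∃ D, IsClubBelow ω1 D ∧
      ∀ δ ∈ D, ∃ a : 𝒜, (f a : Ordinal.{0}) < δ ∧ δ ∈ (a : Set Ordinal.{0}) := by
    -- Otherwise the set of `δ` outside the diagonal union is stationary, so it contains some
    -- `B ∈ I`, which meets each `a ∈ 𝒜` only below `f a` and so contradicts maximality.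
    by_contra! hS
    obtain ⟨B, hBI, hBS⟩ := hdense
      {δ | δ < ω1 ∧ ∀ a : 𝒜, (f a : Ordinal.{0}) < δ → δ ∉ (a : Set Ordinal.{0})}
      (fun x hx => hx.1) fun D hD => by
        obtain ⟨δ, hδD, hδ⟩ := hS D hD
        exact ⟨δ, ⟨hD.1 δ hδD, hδ⟩, hδD⟩
    have hB𝒜 : ∀ a : 𝒜, ¬ StatBelow ω1 (B ∩ a) := fun a =>
      not_statBelow_of_forall_le (f a).2 fun δ hδ => not_lt.1 fun h => (hBS hδ.1).2 a h hδ.2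
    have hBmem : B ∈ 𝒜 := hmax ⟨insert_subset hBI h𝒜I, h𝒜.insert fun a ha _ =>
        ⟨hB𝒜 ⟨a, ha⟩, inter_comm B a ▸ hB𝒜 ⟨a, ha⟩⟩⟩ (subset_insert B 𝒜) (mem_insert B 𝒜)
    exact hB𝒜 ⟨B, hBmem⟩ (by simpa using (hI B hBI).2)
  obtain ⟨δ₀, hδ₀D, -⟩ := hD.2.1 0 (Cardinal.ord_pos.2 (Cardinal.aleph_pos 1))
  have : Nonempty 𝒜 := ⟨(hD𝒜 δ₀ hδ₀D).choose⟩
  refine ⟨fun γ => if h : γ < ω1 then ((Function.invFun f ⟨γ, h⟩ : 𝒜) : Set Ordinal.{0}) else ∅,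
    fun γ hγ => ?_, D, hD, fun δ hδ => ?_⟩
  · simp only [dif_pos hγ]
    exact h𝒜I (Function.invFun f _).2
  · obtain ⟨a, hfa, hδa⟩ := hD𝒜 δ hδ
    refine ⟨f a, hfa, ?_⟩
    have hfa1 : (f a : Ordinal.{0}) < ω1 := (f a).2
    simpa only [dif_pos hfa1, Function.leftInverse_invFun hf a] using hδa

theorem saturation_gives_projective_stationarity_general
    (hsat : ∀ 𝒜 : Set (Set Ordinal.{0}),
      (∀ A ∈ 𝒜, (∀ x ∈ A, x < ω1) ∧ StatBelow ω1 A) →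
      (∀ A ∈ 𝒜, ∀ B ∈ 𝒜, A ≠ B → ¬ StatBelow ω1 (A ∩ B)) →
      ∃ f : ↥𝒜 → ↥(Set.Iio ω1), Function.Injective f)
    (𝒯 : Set (Set Ordinal.{0}))
    (h𝒯 : StatIn ω2 𝒯) :
    ∃ A : Set Ordinal.{0}, (∀ x ∈ A, x < ω1) ∧ StatBelow ω1 A ∧
      ∀ B ⊆ A, StatBelow ω1 B →
        StatIn ω2 {σ | σ ∈ 𝒯 ∧ ∃ γ ∈ B, MeetO1 σ γ} := by
  by_contra! hbad
  set 𝒯over : Set Ordinal.{0} → Set (Set Ordinal.{0}) :=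
    fun B => {σ | σ ∈ 𝒯 ∧ ∃ γ ∈ B, MeetO1 σ γ}
  obtain ⟨A, hA, D, hD, hDA⟩ := NSSaturated.exists_club_subset_diagonal_union hsat
    (I := {B | (∀ x ∈ B, x < ω1) ∧ StatBelow ω1 B ∧ ¬ StatIn ω2 (𝒯over B)})
    (fun B hB => ⟨hB.1, hB.2.1⟩) fun A hA hAs => by
      obtain ⟨B, hBA, hB, hB𝒯⟩ := hbad A hA hAs
      exact ⟨B, ⟨fun x hx => hA x (hBA hx), hB, hB𝒯⟩, hBA⟩
  obtain ⟨σ, hσ𝒯, δ, hδD, hσδ, hσA⟩ :=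
    h𝒯.exists_mem_avoiding_diagonal omega1_lt_omega2.le hD fun γ hγ => (hA γ hγ).2.2
  obtain ⟨γ, hγδ, hδA⟩ := hDA δ hδD
  exact hσA γ hγδ ⟨hσ𝒯, δ, hδA, hσδ⟩

theorem saturation_gives_projective_stationarity
    (hsat : ∀ 𝒜 : Set (Set Ordinal.{0}),
      (∀ A ∈ 𝒜, (∀ x ∈ A, x < ω1) ∧ StatBelow ω1 A) →
      (∀ A ∈ 𝒜, ∀ B ∈ 𝒜, A ≠ B → ¬ StatBelow ω1 (A ∩ B)) →
      ∃ f : ↥𝒜 → ↥(Set.Iio ω1), Function.Injective f)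
    (𝒯 : Set (Set Ordinal.{0}))
    (h𝒯sub : ∀ σ ∈ 𝒯, MemCtble ω2 σ) (h𝒯 : StatIn ω2 𝒯) :
    ∃ A : Set Ordinal.{0}, (∀ x ∈ A, x < ω1) ∧ StatBelow ω1 A ∧
      ∀ B ⊆ A, StatBelow ω1 B →
        StatIn ω2 {σ | σ ∈ 𝒯 ∧ ∃ γ ∈ B, MeetO1 σ γ} :=
  saturation_gives_projective_stationarity_general hsat 𝒯 h𝒯
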